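/- Let $\mathcal{C}$ be an additive category, $X\colon \mathcal{C}\to\mathcal{C}$ additive and locally nilpotent, and $T(X)$ the free monad on $X$. For an object $\mathsf{M} = (M, h_{\mathsf{M}})$ of $\mathcal{C}^{T(X)}$ (identified with a pair with $h_{\mathsf{M}}\colon X(M) \to M$), the following are equivalent: (1) $\mathsf{M}$ is a direct summand of an object of the form $f_!(N)$ for some $N \in \mathcal{C}$; (2) the structure map $h_{\mathsf{M}}\colon X(M) \to M$ is a split monomorphism in $\mathcal{C}$; (3) $\mathsf{M}$ is isomorphic to $f_!(N')$ for some $N' \in \mathcal{C}$. -/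

import Mathlib

open CategoryTheory Limits

universe v u

variable {C : Type u} [Category.{v} C]

/-- The power `X^n` of an endofunctor, with `X^(n+1) = X^n ⋙ X`. -/
def fpow (X : C ⥤ C) : ℕ → (C ⥤ C)
  | 0 => 𝟭 C
  | n + 1 => fpow X n ⋙ X

/-- `X` is locally nilpotent if every object is annihilated by some power of `X`. -/
def LocallyNilpotent (X : C ⥤ C) : Prop :=
  ∀ M : C, ∃ n : ℕ, IsZero ((fpow X n).obj M)

/-- The category `(X ⇓ Id)` of `X`-modules, identified with the Eilenberg–Moore category
of the free monad on `X`. -/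
structure XMod (X : C ⥤ C) : Type max u v where
  carrier : C
  str : X.obj carrier ⟶ carrier

/-- Morphisms of `X`-modules. -/
@[ext]
structure XModHom {X : C ⥤ C} (M N : XMod X) : Type v where
  hom : M.carrier ⟶ N.carrier
  comm : M.str ≫ hom = X.map hom ≫ N.str

instance (X : C ⥤ C) : Category (XMod X) where
  Hom := XModHom
  id M := ⟨𝟙 M.carrier, by simp⟩
  comp f g := ⟨f.hom ≫ g.hom, by
    rw [← Category.assoc, f.comm, Category.assoc, g.comm, ← Category.assoc, ← Functor.map_comp]⟩
  id_comp f := by apply XModHom.ext; simp [CategoryStruct.id, CategoryStruct.comp]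
  comp_id f := by apply XModHom.ext; simp [CategoryStruct.id, CategoryStruct.comp]
  assoc f g h := by apply XModHom.ext; simp [CategoryStruct.comp]

@[simp] lemma XMod.id_hom {X : C ⥤ C} (M : XMod X) : (𝟙 M : XModHom M M).hom = 𝟙 M.carrier := rfl
@[simp] lemma XMod.comp_hom {X : C ⥤ C} {M N P : XMod X} (f : M ⟶ N) (g : N ⟶ P) :
    (f ≫ g).hom = f.hom ≫ g.hom := rfl

/-- `F` is the free `X`-module `f₁(N)` on `N`, encoded via the universal
property of the free–forgetful adjunction `f₁ ⊣ f⋆`. -/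
structure IsFreeXModOn (X : C ⥤ C) (F : XMod X) (N : C) where
  unit : N ⟶ F.carrier
  lift : ∀ (P : XMod X), (N ⟶ P.carrier) → (F ⟶ P)
  fac : ∀ (P : XMod X) (g : N ⟶ P.carrier), unit ≫ (lift P g).hom = g
  uniq : ∀ (P : XMod X) (g : N ⟶ P.carrier) (k : F ⟶ P), unit ≫ k.hom = g → k = lift P g

/-!
For a free module `F` on `N`, the map `φ = biprod.desc unit h_F : N ⊞ X F ⟶ F` is a module map
from `Q = N ⊞ X F` with structure map `X φ ≫ biprod.inr`, and by freeness the module map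
`ψ : F ⟶ Q` extending `biprod.inl` is a section of it; hence `ψ ≫ biprod.snd` retracts `h_F`.
Split structure maps pass to retracts.

Conversely, if `r` retracts `h : X M ⟶ M`, split the idempotent `𝟙 - r ≫ h` as `p ≫ i` with
`i ≫ p = 𝟙 N`. For a module `P`, the operator `T d = r ≫ X d ≫ h_P` on `M ⟶ P` is nilpotent,
since `Tⁿ d` factors through `Xⁿ M = 0`, and every module map `k : M ⟶ P` satisfies
`(1 - T) k = p ≫ i ≫ k`. So module maps `M ⟶ P` correspond to maps `g : N ⟶ P` via
`k ↦ i ≫ k` and `g ↦ (1 - T)⁻¹ (p ≫ g)`: `M` is free on `N`.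
-/

namespace XMod

variable {X : C ⥤ C}

lemma isSplitMono_str_of_retract {M F : XMod X} (h : Retract M F) [IsSplitMono F.str] :
    IsSplitMono M.str := by
  have hir : h.i.hom ≫ h.r.hom = 𝟙 M.carrier := congrArg XModHom.hom h.retract
  refine IsSplitMono.mk' ⟨h.i.hom ≫ retraction F.str ≫ X.map h.r.hom, ?_⟩
  rw [reassoc_of% h.i.comm, IsSplitMono.id_assoc, ← X.map_comp, hir, X.map_id]

end XMod

namespace IsFreeXModOn

variable {X : C ⥤ C} {F : XMod X} {N : C} (hF : IsFreeXModOn X F N)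
include hF

lemma hom_ext {P : XMod X} {k₁ k₂ : F ⟶ P} (h : hF.unit ≫ k₁.hom = hF.unit ≫ k₂.hom) :
    k₁ = k₂ :=
  (hF.uniq P _ k₁ h).trans (hF.uniq P _ k₂ rfl).symm

lemma isSplitMono_str [HasZeroMorphisms C] [HasBinaryBiproduct N (X.obj F.carrier)] :
    IsSplitMono F.str := by
  let φ : N ⊞ X.obj F.carrier ⟶ F.carrier := biprod.desc hF.unit F.str
  let Q : XMod X := ⟨N ⊞ X.obj F.carrier, X.map φ ≫ biprod.inr⟩
  let Φ : Q ⟶ F := ⟨φ, by simp [Q, φ]⟩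
  let ψ : F ⟶ Q := hF.lift Q biprod.inl
  have hψΦ : ψ ≫ Φ = 𝟙 F := hF.hom_ext (by simp [ψ, Φ, φ, reassoc_of% hF.fac])
  refine IsSplitMono.mk' ⟨ψ.hom ≫ biprod.snd, ?_⟩
  rw [reassoc_of% ψ.comm]
  simp only [Q, Category.assoc, biprod.inr_snd, Category.comp_id, ← X.map_comp]
  rw [← XMod.comp_hom ψ Φ, hψΦ, XMod.id_hom, X.map_id]

end IsFreeXModOn

namespace XMod

section ShiftEnd

variable [Preadditive C] {X : C ⥤ C} [X.Additive]

def shiftEnd {A : C} (r : A ⟶ X.obj A) (P : XMod X) : Module.End ℤ (A ⟶ P.carrier) where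
  toFun d := r ≫ X.map d ≫ P.str
  map_add' _ _ := by simp
  map_smul' _ _ := by simp

@[simp]
lemma shiftEnd_apply {A : C} (r : A ⟶ X.obj A) (P : XMod X) (d : A ⟶ P.carrier) :
    shiftEnd r P d = r ≫ X.map d ≫ P.str :=
  rfl

lemma exists_shiftEnd_pow_apply_eq_comp {A : C} (r : A ⟶ X.obj A) (P : XMod X) (j : ℕ)
    (d : A ⟶ P.carrier) :
    ∃ (a : A ⟶ (fpow X j).obj A) (b : (fpow X j).obj A ⟶ P.carrier),
      (shiftEnd r P ^ j) d = a ≫ b := by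
  induction j with
  | zero => exact ⟨𝟙 A, d, by simp [fpow]⟩
  | succ j ih =>
    obtain ⟨a, b, hab⟩ := ih
    refine ⟨r ≫ X.map a, X.map b ≫ P.str, ?_⟩
    rw [pow_succ', Module.End.mul_apply, hab, shiftEnd_apply, X.map_comp, Category.assoc]
    exact (Category.assoc r (X.map a) _).symm

lemma isNilpotent_shiftEnd {A : C} {n : ℕ} (hA : IsZero ((fpow X n).obj A))
    (r : A ⟶ X.obj A) (P : XMod X) : IsNilpotent (shiftEnd r P) := by
  refine ⟨n, LinearMap.ext fun d => ?_⟩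
  obtain ⟨a, b, hab⟩ := exists_shiftEnd_pow_apply_eq_comp r P n d
  rw [hab, hA.eq_of_tgt a 0, zero_comp, LinearMap.zero_apply]

lemma one_sub_shiftEnd_apply_hom {M P : XMod X} (r : M.carrier ⟶ X.obj M.carrier) (k : M ⟶ P) :
    (1 - shiftEnd r P) k.hom = (𝟙 M.carrier - r ≫ M.str) ≫ k.hom := by
  simp [← k.comm]

end ShiftEnd

section Splitting

variable [Preadditive C] {X : C ⥤ C} {M : XMod X} {r : M.carrier ⟶ X.obj M.carrier}
  (hr : M.str ≫ r = 𝟙 (X.obj M.carrier)) {N : C} {i : N ⟶ M.carrier} {p : M.carrier ⟶ N}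
  (hip : i ≫ p = 𝟙 N) (hpi : p ≫ i = 𝟙 M.carrier - r ≫ M.str)
include hr hip hpi

lemma str_comp_proj_eq_zero : M.str ≫ p = 0 := by
  have hp : p = p ≫ i ≫ p := by rw [hip, Category.comp_id]
  rw [hp, ← Category.assoc p, hpi]
  simp [reassoc_of% hr]

lemma incl_comp_retraction_eq_zero : i ≫ r = 0 := by
  have hi : i = i ≫ p ≫ i := by rw [reassoc_of% hip]
  rw [hi, hpi]
  simp [hr]

noncomputable def _root_.IsFreeXModOn.ofSplitting [X.Additive] {n : ℕ}
    (hM : IsZero ((fpow X n).obj M.carrier)) : IsFreeXModOn X M N :=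
  let hT (P : XMod X) := (isNilpotent_shiftEnd hM r P).isUnit_one_sub
  have lift_eq (P : XMod X) (g : N ⟶ P.carrier) :
      (hT P).unit.inv (p ≫ g) = p ≫ g + shiftEnd r P ((hT P).unit.inv (p ≫ g)) := by
    have := Module.End.isUnit_apply_inv_apply_of_isUnit (hT P) (p ≫ g)
    rwa [LinearMap.sub_apply, Module.End.one_apply, sub_eq_iff_eq_add] at this
  { unit := i
    lift P g := ⟨(hT P).unit.inv (p ≫ g), by
      conv_lhs => rw [lift_eq]
      simp [reassoc_of% (str_comp_proj_eq_zero hr hip hpi), reassoc_of% hr]⟩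
    fac P g := by
      dsimp only
      rw [lift_eq, Preadditive.comp_add, reassoc_of% hip, shiftEnd_apply,
        reassoc_of% (incl_comp_retraction_eq_zero hr hip hpi), zero_comp, add_zero]
    uniq P g k hk := XModHom.ext <| ((Module.End.isUnit_iff _).1 (hT P)).injective <| by
      rw [one_sub_shiftEnd_apply_hom, ← hpi, Category.assoc, hk,
        Module.End.isUnit_apply_inv_apply_of_isUnit] }

end Splitting

end XMod

theorem relative_projective_tfae
    [Preadditive C] [HasFiniteBiproducts C] [IsIdempotentComplete C]
    {X : C ⥤ C} [X.Additive] (hX : LocallyNilpotent X) (M : XMod X) :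
    List.TFAE
      [ ∃ (N : C) (F : XMod X) (_ : Nonempty (IsFreeXModOn X F N))
          (s : M ⟶ F) (r : F ⟶ M), s ≫ r = 𝟙 M,
        ∃ r : M.carrier ⟶ X.obj M.carrier, M.str ≫ r = 𝟙 (X.obj M.carrier),
        ∃ N' : C, Nonempty (IsFreeXModOn X M N') ] := by
  have := hasBinaryBiproducts_of_finite_biproducts C
  tfae_have 1 → 2 := by
    rintro ⟨N, F, ⟨hF⟩, s, r, hsr⟩
    have := hF.isSplitMono_str
    have := XMod.isSplitMono_str_of_retract ⟨s, r, hsr⟩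
    exact ⟨retraction M.str, IsSplitMono.id M.str⟩
  tfae_have 2 → 3 := by
    rintro ⟨r, hr⟩
    obtain ⟨n, hM⟩ := hX M.carrier
    have hidem : (r ≫ M.str) ≫ (r ≫ M.str) = r ≫ M.str := by simp [reassoc_of% hr]
    obtain ⟨N', i, p, hip, hpi⟩ :=
      IsIdempotentComplete.idempotents_split M.carrier _ (Idempotents.idem_of_id_sub_idem _ hidem)
    exact ⟨N', ⟨IsFreeXModOn.ofSplitting hr hip hpi hM⟩⟩
  tfae_have 3 → 1 := fun ⟨N', hF⟩ => ⟨N', M, hF, 𝟙 M, 𝟙 M, Category.id_comp _⟩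
  tfae_finish
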